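/- arXiv:1606.05848 — 2 statements merged into one kernel-verified Lean document; each statement's English description precedes it below -/
import Mathlib

section
/- Let S be a positive integer and for s = 1,…,S let Ω_s ⊆ ℝⁿ be nonempty, closed and convex sets, A_s real n×n matrices, U_s real n×n unitary matrices, and α_s > 0; set C_s(x) = α_s U_s(Ω_s) + A_s x, K_s = (1/α_s)·U_sᵀ(I − A_s), and L = Σ_{s=1}^{S} ‖I − A_s‖₂². Assume the solution set {x : x ∈ ∩_{s=1}^{S} C_s(x)} is nonempty. Let {x^k} be generated from an arbitrary x⁰ ∈ ℝⁿ by the simultaneous iteration x^{k+1} = x^k − γ_k·Σ_{s=1}^{S} α_s²·K_sᵀ(K_s x^k − P_{Ω_s}(K_s x^k)), where the step sizes satisfy γ_k ∈ (ε, 2/L − ε) for some ε > 0 and all k ≥ 0. Then {x^k} converges to a point x* satisfying x* ∈ ∩_{s=1}^{S} C_s(x*). -/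
noncomputable section

open Matrix Finset Filter

/-- `P` is the metric projection onto the set `Ω`: for every `z`, `P z` is a point of `Ω`
closest to `z`. -/
def IsProjOn {E : Type*} [NormedAddCommGroup E] (Ω : Set E) (P : E → E) : Prop :=
  ∀ z, P z ∈ Ω ∧ ∀ y ∈ Ω, ‖z - P z‖ ≤ ‖z - y‖

/-!
Write `Tₛ := Kₛ` and `wₛ := αₛ²`. Then `x ∈ Cₛ(x)` iff `Tₛ x ∈ Ωₛ`, the iteration is
`x ↦ x - γ ∇G(x)`, and `∑ₛ wₛ ‖Tₛ‖² = L` because `αₛ Kₛ = Uₛᵀ (I - Aₛ)` with `Uₛᵀ` unitary.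
For any solution `z`, the variational inequality of the projections gives
`⟪∇G(x), x - z⟫ ≥ 2 G(x)`, and Cauchy–Schwarz gives `‖∇G(x)‖² ≤ 2 L G(x)`; hence
`‖xᵏ⁺¹ - z‖² + 2 ε² L G(xᵏ) ≤ ‖xᵏ - z‖²`. So the iterates are Fejér monotone with respect to
the solution set and `∑ₖ G(xᵏ) < ∞`. A cluster point of the bounded sequence is then a solution
(its residuals vanish and the `Ωₛ` are closed), and Fejér monotonicity forces convergence to it.
-/

open scoped RealInnerProductSpace Topology

theorem IsProjOn.inner_sub_nonpos {E : Type*} [NormedAddCommGroup E] [InnerProductSpace ℝ E]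
    {Ω : Set E} {P : E → E} (hΩ : Convex ℝ Ω) (hP : IsProjOn Ω P) (z : E) {y : E}
    (hy : y ∈ Ω) : ⟪z - P z, y - P z⟫ ≤ 0 := by
  obtain ⟨hmem, hmin⟩ := hP z
  have : Nonempty Ω := ⟨⟨P z, hmem⟩⟩
  refine (norm_eq_iInf_iff_real_inner_le_zero hΩ hmem).mp ?_ y hy
  refine le_antisymm (le_ciInf fun w => hmin w w.2) ?_
  exact ciInf_le ⟨0, by rintro r ⟨w, rfl⟩; exact norm_nonneg _⟩ (⟨P z, hmem⟩ : Ω)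

theorem IsProjOn.mem_of_tendsto {E ι : Type*} [NormedAddCommGroup E] {Ω : Set E} {P : E → E}
    (hΩ : IsClosed Ω) (hP : IsProjOn Ω P) {l : Filter ι} [l.NeBot] {y : ι → E} {a : E}
    (hy : Tendsto y l (𝓝 a)) (hres : Tendsto (fun i => y i - P (y i)) l (𝓝 0)) : a ∈ Ω := by
  have hPy : Tendsto (fun i => P (y i)) l (𝓝 a) := by
    simpa using hy.sub hres
  exact hΩ.mem_of_tendsto hPy (Eventually.of_forall fun i => (hP (y i)).1)

theorem tendsto_of_dist_succ_le_of_mem_closure {X : Type*} [PseudoMetricSpace X] {x : ℕ → X}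
    {a : X} (hdec : ∀ k, dist (x (k + 1)) a ≤ dist (x k) a) (ha : a ∈ closure (Set.range x)) :
    Tendsto x atTop (𝓝 a) := by
  have hanti : Antitone fun k => dist (x k) a := antitone_nat_of_succ_le hdec
  rw [Metric.tendsto_atTop]
  intro δ hδ
  obtain ⟨N, hN⟩ := Metric.mem_closure_range_iff.mp ha δ hδ
  exact ⟨N, fun k hk => (hanti hk).trans_lt (by simpa only [dist_comm] using hN)⟩

theorem summable_of_add_le_of_nonneg {a b : ℕ → ℝ} (ha : ∀ k, 0 ≤ a k) (hb : ∀ k, 0 ≤ b k)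
    (hab : ∀ k, a (k + 1) + b k ≤ a k) : Summable b := by
  refine summable_of_sum_range_le (c := a 0) hb fun m => ?_
  have htel : ∑ k ∈ range m, (a k - a (k + 1)) = a 0 - a m := sum_range_sub' _ _
  have hle : ∑ k ∈ range m, b k ≤ ∑ k ∈ range m, (a k - a (k + 1)) :=
    sum_le_sum fun k _ => by linarith [hab k]
  linarith [ha m]

theorem pos_of_mem_Ioo_two_div_sub {L ε γ : ℝ} (hε : 0 < ε) (hγ : γ ∈ Set.Ioo ε (2 / L - ε)) :
    0 < L := by
  have h : 0 < 2 / L := by linarith [hγ.1, hγ.2]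
  exact (div_pos_iff_of_pos_left two_pos).mp h

theorem sq_mul_le_mul_two_sub_mul {L ε γ : ℝ} (hε : 0 < ε) (hγ : γ ∈ Set.Ioo ε (2 / L - ε)) :
    ε ^ 2 * L ≤ γ * (2 - γ * L) := by
  have hL := pos_of_mem_Ioo_two_div_sub hε hγ
  have h : ε * L < 2 - γ * L := by
    have := mul_lt_mul_of_pos_right hγ.2 hL
    rw [sub_mul, div_mul_cancel₀ _ hL.ne'] at this
    linarith
  calc ε ^ 2 * L = ε * (ε * L) := by ring
    _ ≤ γ * (2 - γ * L) := mul_le_mul hγ.1.le h.le (by positivity) (hε.trans hγ.1).le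

section ProximityGradient

variable {ι E F : Type*} [Fintype ι]
  [NormedAddCommGroup E] [InnerProductSpace ℝ E] [NormedAddCommGroup F] [InnerProductSpace ℝ F]

/-- In the paper's notation `sqResidual T w P = 2 G` and `proximityGrad T w P = ∇G`. -/
def sqResidual (T : ι → E →L[ℝ] F) (w : ι → ℝ) (P : ι → F → F) (x : E) : ℝ :=
  ∑ s, w s * ‖T s x - P s (T s x)‖ ^ 2

variable {T : ι → E →L[ℝ] F} {w : ι → ℝ} {P : ι → F → F}

theorem sqResidual_nonneg (hw : ∀ s, 0 ≤ w s) (x : E) : 0 ≤ sqResidual T w P x :=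
  sum_nonneg fun s _ => mul_nonneg (hw s) (sq_nonneg _)

theorem tendsto_residual_of_tendsto_sqResidual {κ : Type*} {l : Filter κ} (hw : ∀ s, 0 < w s)
    {y : κ → E} (hy : Tendsto (fun k => sqResidual T w P (y k)) l (𝓝 0)) (s : ι) :
    Tendsto (fun k => T s (y k) - P s (T s (y k))) l (𝓝 0) := by
  have hle : ∀ k, ‖T s (y k) - P s (T s (y k))‖ ^ 2 ≤ (w s)⁻¹ * sqResidual T w P (y k) := by
    intro k
    rw [le_inv_mul_iff₀ (hw s)]
    exact single_le_sum (f := fun s => w s * ‖T s (y k) - P s (T s (y k))‖ ^ 2)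
      (fun t _ => mul_nonneg (hw t).le (sq_nonneg _)) (mem_univ s)
  have hsq : Tendsto (fun k => ‖T s (y k) - P s (T s (y k))‖ ^ 2) l (𝓝 0) :=
    squeeze_zero (fun k => sq_nonneg _) hle (by simpa using hy.const_mul (w s)⁻¹)
  rw [tendsto_zero_iff_norm_tendsto_zero]
  simpa using hsq.sqrt

variable [CompleteSpace E] [CompleteSpace F]

def proximityGrad (T : ι → E →L[ℝ] F) (w : ι → ℝ) (P : ι → F → F) (x : E) : E :=
  ∑ s, w s • ContinuousLinearMap.adjoint (T s) (T s x - P s (T s x))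

theorem sqResidual_le_inner_proximityGrad {Ω : ι → Set F} (hΩ : ∀ s, Convex ℝ (Ω s))
    (hP : ∀ s, IsProjOn (Ω s) (P s)) (hw : ∀ s, 0 ≤ w s) (x : E) {z : E}
    (hz : ∀ s, T s z ∈ Ω s) : sqResidual T w P x ≤ ⟪proximityGrad T w P x, x - z⟫ := by
  rw [proximityGrad, sum_inner]
  refine sum_le_sum fun s _ => ?_
  have hsplit : T s (x - z) = (T s x - P s (T s x)) - (T s z - P s (T s x)) := by
    rw [map_sub]; abel
  set e := T s x - P s (T s x)
  have hvar : ⟪e, T s z - P s (T s x)⟫ ≤ 0 := (hP s).inner_sub_nonpos (hΩ s) _ (hz s)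
  rw [real_inner_smul_left, ContinuousLinearMap.adjoint_inner_left, hsplit, inner_sub_right,
    real_inner_self_eq_norm_sq]
  exact mul_le_mul_of_nonneg_left (by linarith) (hw s)

theorem norm_proximityGrad_sq_le (hw : ∀ s, 0 ≤ w s) (x : E) :
    ‖proximityGrad T w P x‖ ^ 2 ≤ (∑ s, w s * ‖T s‖ ^ 2) * sqResidual T w P x := by
  set e := fun s => T s x - P s (T s x)
  have hnorm : ‖proximityGrad T w P x‖ ≤ ∑ s, w s * ‖T s‖ * ‖e s‖ := by
    refine (norm_sum_le _ _).trans (sum_le_sum fun s _ => ?_)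
    rw [norm_smul, Real.norm_of_nonneg (hw s), mul_assoc]
    refine mul_le_mul_of_nonneg_left ?_ (hw s)
    simpa only [ContinuousLinearMap.adjoint.norm_map] using
      (ContinuousLinearMap.adjoint (T s)).le_opNorm (e s)
  -- weighted Cauchy–Schwarz
  have hcs : (∑ s, w s * ‖T s‖ * ‖e s‖) ^ 2 ≤ (∑ s, w s * ‖T s‖ ^ 2) * sqResidual T w P x :=
    sum_sq_le_sum_mul_sum_of_sq_le_mul _ (fun s _ => mul_nonneg (hw s) (sq_nonneg _))
      (fun s _ => mul_nonneg (hw s) (sq_nonneg _)) (fun s _ => le_of_eq (by ring))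
  exact (pow_le_pow_left₀ (norm_nonneg _) hnorm 2).trans hcs

theorem norm_sub_smul_proximityGrad_sub_sq_add_le {Ω : ι → Set F}
    (hΩ : ∀ s, Convex ℝ (Ω s)) (hP : ∀ s, IsProjOn (Ω s) (P s)) (hw : ∀ s, 0 ≤ w s)
    {L : ℝ} (hL : ∑ s, w s * ‖T s‖ ^ 2 ≤ L) {γ : ℝ} (hγ : 0 ≤ γ) (x : E) {z : E}
    (hz : ∀ s, T s z ∈ Ω s) :
    ‖x - γ • proximityGrad T w P x - z‖ ^ 2 + γ * (2 - γ * L) * sqResidual T w P x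
      ≤ ‖x - z‖ ^ 2 := by
  have hlow := sqResidual_le_inner_proximityGrad hΩ hP hw x hz
  have hup := (norm_proximityGrad_sq_le (P := P) hw x).trans
    (mul_le_mul_of_nonneg_right hL (sqResidual_nonneg hw x))
  have hexp : ‖x - γ • proximityGrad T w P x - z‖ ^ 2 = ‖x - z‖ ^ 2
      - 2 * γ * ⟪proximityGrad T w P x, x - z⟫ + γ ^ 2 * ‖proximityGrad T w P x‖ ^ 2 := by
    rw [sub_right_comm, norm_sub_sq_real, real_inner_smul_right, norm_smul, mul_pow,
      Real.norm_of_nonneg hγ, real_inner_comm]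
    ring
  rw [hexp]
  nlinarith [mul_le_mul_of_nonneg_left hlow hγ, mul_le_mul_of_nonneg_left hup (sq_nonneg γ)]

theorem exists_tendsto_of_proximityGrad_iterate [ProperSpace E] {Ω : ι → Set F}
    (hcl : ∀ s, IsClosed (Ω s)) (hconv : ∀ s, Convex ℝ (Ω s)) (hP : ∀ s, IsProjOn (Ω s) (P s))
    (hw : ∀ s, 0 < w s) {L : ℝ} (hL : ∑ s, w s * ‖T s‖ ^ 2 ≤ L)
    (hsol : ∃ z, ∀ s, T s z ∈ Ω s) {γ : ℕ → ℝ} {ε : ℝ} (hε : 0 < ε)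
    (hγ : ∀ k, γ k ∈ Set.Ioo ε (2 / L - ε)) {x : ℕ → E}
    (hrec : ∀ k, x (k + 1) = x k - γ k • proximityGrad T w P (x k)) :
    ∃ xstar, Tendsto x atTop (𝓝 xstar) ∧ ∀ s, T s xstar ∈ Ω s := by
  obtain ⟨z₀, hz₀⟩ := hsol
  have hw₀ : ∀ s, 0 ≤ w s := fun s => (hw s).le
  have hQ₀ : ∀ k, 0 ≤ sqResidual T w P (x k) := fun k => sqResidual_nonneg hw₀ (x k)
  set c := ε ^ 2 * L
  have hc : 0 < c := mul_pos (pow_pos hε 2) (pos_of_mem_Ioo_two_div_sub hε (hγ 0))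
  have hfejer : ∀ z, (∀ s, T s z ∈ Ω s) → ∀ k,
      ‖x (k + 1) - z‖ ^ 2 + c * sqResidual T w P (x k) ≤ ‖x k - z‖ ^ 2 := by
    intro z hz k
    have hγ₀ : 0 ≤ γ k := hε.le.trans (hγ k).1.le
    have hdesc := norm_sub_smul_proximityGrad_sub_sq_add_le hconv hP hw₀ hL hγ₀ (x k) hz
    have hrate := mul_le_mul_of_nonneg_right (sq_mul_le_mul_two_sub_mul hε (hγ k)) (hQ₀ k)
    rw [hrec k]
    linarith
  have hdist : ∀ z, (∀ s, T s z ∈ Ω s) → ∀ k, dist (x (k + 1)) z ≤ dist (x k) z := by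
    intro z hz k
    rw [dist_eq_norm, dist_eq_norm,
      ← pow_le_pow_iff_left₀ (norm_nonneg _) (norm_nonneg _) two_ne_zero]
    linarith [hfejer z hz k, mul_nonneg hc.le (hQ₀ k)]
  have hres : ∀ s, Tendsto (fun k => T s (x k) - P s (T s (x k))) atTop (𝓝 0) := by
    have hsum : Summable fun k => c * sqResidual T w P (x k) :=
      summable_of_add_le_of_nonneg (fun k => sq_nonneg ‖x k - z₀‖)
        (fun k => mul_nonneg hc.le (hQ₀ k)) (hfejer z₀ hz₀)
    refine tendsto_residual_of_tendsto_sqResidual hw ?_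
    simpa [hc.ne'] using hsum.tendsto_atTop_zero.const_mul c⁻¹
  have hball : ∀ k, x k ∈ Metric.closedBall z₀ (dist (x 0) z₀) := fun k =>
    antitone_nat_of_succ_le (f := fun k => dist (x k) z₀) (hdist z₀ hz₀) (Nat.zero_le k)
  obtain ⟨xstar, -, φ, hmono, hφ⟩ := tendsto_subseq_of_bounded Metric.isBounded_closedBall hball
  have hstar : ∀ s, T s xstar ∈ Ω s := fun s =>
    (hP s).mem_of_tendsto (hcl s) (((T s).continuous.tendsto xstar).comp hφ)
      ((hres s).comp hmono.tendsto_atTop)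
  refine ⟨xstar, tendsto_of_dist_succ_le_of_mem_closure (hdist xstar hstar) ?_, hstar⟩
  exact mem_closure_of_tendsto hφ (Eventually.of_forall fun j => Set.mem_range_self _)

end ProximityGradient

section EuclideanMatrix

variable {m : Type*} [Fintype m] [DecidableEq m]

theorem toEuclideanCLM_transpose (M : Matrix m m ℝ) :
    toEuclideanCLM (𝕜 := ℝ) Mᵀ = ContinuousLinearMap.adjoint (toEuclideanCLM (𝕜 := ℝ) M) := by
  rw [← ContinuousLinearMap.star_eq_adjoint, ← map_star, star_eq_conjTranspose,
    conjTranspose_eq_transpose_of_trivial]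

theorem toEuclideanCLM_mul_apply (M N : Matrix m m ℝ) (v : EuclideanSpace ℝ m) :
    toEuclideanCLM (𝕜 := ℝ) (M * N) v =
      toEuclideanCLM (𝕜 := ℝ) M (toEuclideanCLM (𝕜 := ℝ) N v) := by
  rw [map_mul, mul_apply_eq_comp]

theorem toEuclideanCLM_mem_unitary {U : Matrix m m ℝ} (h₁ : Uᵀ * U = 1) (h₂ : U * Uᵀ = 1) :
    toEuclideanCLM (𝕜 := ℝ) U ∈ unitary (EuclideanSpace ℝ m →L[ℝ] EuclideanSpace ℝ m) := by
  rw [Unitary.mem_iff, ← map_star, ← map_mul, ← map_mul, star_eq_conjTranspose,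
    conjTranspose_eq_transpose_of_trivial, h₁, h₂, map_one, and_self]

theorem norm_toEuclideanCLM_transpose_mul {U : Matrix m m ℝ} (h₁ : Uᵀ * U = 1)
    (h₂ : U * Uᵀ = 1) (B : Matrix m m ℝ) :
    ‖toEuclideanCLM (𝕜 := ℝ) (Uᵀ * B)‖ = ‖toEuclideanCLM (𝕜 := ℝ) B‖ := by
  rw [map_mul]
  exact CStarRing.norm_mem_unitary_mul _ (toEuclideanCLM_mem_unitary (by simpa using h₂) h₁)

theorem mem_image_smul_add_iff {α : ℝ} (hα : α ≠ 0) {U A : Matrix m m ℝ} (h₁ : Uᵀ * U = 1)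
    (h₂ : U * Uᵀ = 1) (Ω : Set (EuclideanSpace ℝ m)) (x : EuclideanSpace ℝ m) :
    x ∈ (fun y => α • toEuclideanLin U y + toEuclideanLin A x) '' Ω ↔
      toEuclideanLin ((1 / α) • (Uᵀ * (1 - A))) x ∈ Ω := by
  change x ∈ (fun y => α • toEuclideanCLM (𝕜 := ℝ) U y + toEuclideanCLM (𝕜 := ℝ) A x) '' Ω ↔
    toEuclideanCLM (𝕜 := ℝ) ((1 / α) • (Uᵀ * (1 - A))) x ∈ Ω
  have hres : toEuclideanCLM (𝕜 := ℝ) (1 - A) x = x - toEuclideanCLM (𝕜 := ℝ) A x := by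
    simp
  have key : ∀ y, α • toEuclideanCLM (𝕜 := ℝ) U y + toEuclideanCLM (𝕜 := ℝ) A x = x ↔
      y = toEuclideanCLM (𝕜 := ℝ) ((1 / α) • (Uᵀ * (1 - A))) x := by
    intro y
    rw [map_smul, _root_.smul_apply, toEuclideanCLM_mul_apply, hres, ← eq_sub_iff_add_eq]
    constructor
    · intro h
      rw [← h, map_smul, ← toEuclideanCLM_mul_apply, h₁, map_one, one_apply_eq_self,
        smul_smul, one_div_mul_cancel hα, one_smul]
    · rintro rfl
      rw [map_smul, smul_smul, mul_one_div_cancel hα, one_smul, ← toEuclideanCLM_mul_apply, h₂,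
        map_one, one_apply_eq_self]
  simp only [Set.mem_image, key, exists_eq_right]

end EuclideanMatrix

theorem stmt_12_general {n S : ℕ}
    (Ω : Fin S → Set (EuclideanSpace ℝ (Fin n)))
    (hcl : ∀ s, IsClosed (Ω s)) (hconv : ∀ s, Convex ℝ (Ω s))
    (A U : Fin S → Matrix (Fin n) (Fin n) ℝ)
    (hU1 : ∀ s, (U s)ᵀ * U s = 1) (hU2 : ∀ s, U s * (U s)ᵀ = 1)
    (α : Fin S → ℝ) (hα : ∀ s, 0 < α s)
    (P : Fin S → EuclideanSpace ℝ (Fin n) → EuclideanSpace ℝ (Fin n))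
    (hP : ∀ s, IsProjOn (Ω s) (P s))
    (C : Fin S → EuclideanSpace ℝ (Fin n) → Set (EuclideanSpace ℝ (Fin n)))
    (hC : ∀ s x, C s x =
      (fun y => α s • toEuclideanLin (U s) y + toEuclideanLin (A s) x) '' Ω s)
    (K : Fin S → Matrix (Fin n) (Fin n) ℝ)
    (hK : ∀ s, K s = (1 / α s) • ((U s)ᵀ * (1 - A s)))
    (L : ℝ) (hL : L = ∑ s, ‖toEuclideanCLM (𝕜 := ℝ) (n := Fin n) (1 - A s)‖ ^ 2)
    (hsol : ∃ x, ∀ s, x ∈ C s x)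
    (γ : ℕ → ℝ) (ε : ℝ) (hε : 0 < ε) (hγ : ∀ k, γ k ∈ Set.Ioo ε (2 / L - ε))
    (x : ℕ → EuclideanSpace ℝ (Fin n))
    (hrec : ∀ k, x (k + 1) = x k - γ k • ∑ s, (α s) ^ 2 •
      toEuclideanLin (K s)ᵀ
        (toEuclideanLin (K s) (x k) - P s (toEuclideanLin (K s) (x k)))) :
    ∃ xstar, Tendsto x atTop (nhds xstar) ∧ ∀ s, xstar ∈ C s xstar := by
  set T : Fin S → EuclideanSpace ℝ (Fin n) →L[ℝ] EuclideanSpace ℝ (Fin n) :=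
    fun s => toEuclideanCLM (𝕜 := ℝ) (K s)
  have hfeas : ∀ s z, z ∈ C s z ↔ T s z ∈ Ω s := fun s z => by
    rw [hC, mem_image_smul_add_iff (hα s).ne' (hU1 s) (hU2 s), ← hK s]
    rfl
  have hnorm : ∑ s, α s ^ 2 * ‖T s‖ ^ 2 = L := by
    refine hL ▸ sum_congr rfl fun s _ => ?_
    have hαK : (U s)ᵀ * (1 - A s) = α s • K s := by
      rw [hK s, smul_smul, mul_one_div_cancel (hα s).ne', one_smul]
    rw [← norm_toEuclideanCLM_transpose_mul (hU1 s) (hU2 s) (1 - A s), hαK, map_smul,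
      norm_smul, mul_pow, Real.norm_eq_abs, sq_abs]
  have hiter : ∀ k, x (k + 1) = x k - γ k • proximityGrad T (fun s => α s ^ 2) P (x k) := by
    intro k
    simp only [hrec k, proximityGrad, T, ← toEuclideanCLM_transpose]
    rfl
  obtain ⟨xstar, hlim, hstar⟩ := exists_tendsto_of_proximityGrad_iterate hcl hconv hP
    (fun s => pow_pos (hα s) 2) hnorm.le (hsol.imp fun z hz s => (hfeas s z).mp (hz s))
    hε hγ hiter
  exact ⟨xstar, hlim, fun s => (hfeas s xstar).mpr (hstar s)⟩

theorem stmt_12 {n S : ℕ} (hS : 0 < S)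
    (Ω : Fin S → Set (EuclideanSpace ℝ (Fin n)))
    (hne : ∀ s, (Ω s).Nonempty) (hcl : ∀ s, IsClosed (Ω s)) (hconv : ∀ s, Convex ℝ (Ω s))
    (A U : Fin S → Matrix (Fin n) (Fin n) ℝ)
    (hU1 : ∀ s, (U s)ᵀ * U s = 1) (hU2 : ∀ s, U s * (U s)ᵀ = 1)
    (α : Fin S → ℝ) (hα : ∀ s, 0 < α s)
    (P : Fin S → EuclideanSpace ℝ (Fin n) → EuclideanSpace ℝ (Fin n))
    (hP : ∀ s, IsProjOn (Ω s) (P s))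
    (C : Fin S → EuclideanSpace ℝ (Fin n) → Set (EuclideanSpace ℝ (Fin n)))
    (hC : ∀ s x, C s x =
      (fun y => α s • toEuclideanLin (U s) y + toEuclideanLin (A s) x) '' Ω s)
    (K : Fin S → Matrix (Fin n) (Fin n) ℝ)
    (hK : ∀ s, K s = (1 / α s) • ((U s)ᵀ * (1 - A s)))
    (L : ℝ) (hL : L = ∑ s, ‖toEuclideanCLM (𝕜 := ℝ) (n := Fin n) (1 - A s)‖ ^ 2)
    (hsol : ∃ x, ∀ s, x ∈ C s x)
    (γ : ℕ → ℝ) (ε : ℝ) (hε : 0 < ε) (hγ : ∀ k, γ k ∈ Set.Ioo ε (2 / L - ε))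
    (x : ℕ → EuclideanSpace ℝ (Fin n))
    (hrec : ∀ k, x (k + 1) = x k - γ k • ∑ s, (α s) ^ 2 •
      toEuclideanLin (K s)ᵀ
        (toEuclideanLin (K s) (x k) - P s (toEuclideanLin (K s) (x k)))) :
    ∃ xstar, Tendsto x atTop (nhds xstar) ∧ ∀ s, xstar ∈ C s xstar :=
  stmt_12_general Ω hcl hconv A U hU1 hU2 α hα P hP C hC K hK L hL hsol γ ε hε hγ x hrec
end
end

section
/- Let S be a positive integer and for s = 1,…,S let Ω_s ⊆ ℝⁿ be nonempty, closed and convex sets, A_s real n×n matrices, U_s real n×n unitary matrices, and α_s > 0; set C_s(x) = α_s U_s(Ω_s) + A_s x and K_s = (1/α_s)·U_sᵀ(I − A_s). Assume the solution set {x : x ∈ ∩_{s=1}^{S} C_s(x)} is nonempty. Let {σ_k} be an S-steering sequence, let i(k) = k mod S be the cyclic control, and let {x^k} be generated from an arbitrary x⁰ ∈ ℝⁿ by the sequential iteration x^{k+1} = x^k − σ_k·α_{i(k)}²·K_{i(k)}ᵀ(K_{i(k)} x^k − P_{Ω_{i(k)}}(K_{i(k)} x^k)). If the sequence {x^k} is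 bounded, then it converges to a point x* satisfying x* ∈ ∩_{s=1}^{S} C_s(x*). -/
/-!
Each step is a gradient step for `½ dist (K_s x, Ω_s)²`, and once the step sizes are small it
is Fejér monotone with respect to every solution `z`:
`‖x_{k+1} - z‖² + τ_k ‖r_k‖² ≤ ‖x_k - z‖²`, where `τ_k = σ_k α_{i(k)}²` and `r_k` is the
residual of the active constraint. Hence the iterates are bounded and `∑ σ_k ‖r_k‖² < ∞`. A steering
sequence is comparable to `σ_{mS}` across the cycle starting at `mS` and `∑ σ_{mS} = ∞`, so
infinitely many whole cycles have uniformly small residuals. A cluster point of the iterates at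
the starts of those cycles satisfies every constraint, and Fejér monotonicity towards it makes the
whole sequence converge. Finally, `x ∈ C_s(x)` is equivalent to `K_s x ∈ Ω_s` because `U_s` is
unitary.
-/

noncomputable section

open Matrix Finset Filter

open scoped RealInnerProductSpace Topology InnerProduct

namespace IsProjOn

variable {F : Type*} [NormedAddCommGroup F] [InnerProductSpace ℝ F] {Ω : Set F} {P : F → F}

theorem inner_sub_le_zero (hconv : Convex ℝ Ω) (hP : IsProjOn Ω P) (z : F) {y : F}
    (hy : y ∈ Ω) : ⟪z - P z, y - P z⟫ ≤ 0 := by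
  have : Nonempty Ω := ⟨⟨P z, (hP z).1⟩⟩
  refine (norm_eq_iInf_iff_real_inner_le_zero hconv (hP z).1).1
    (le_antisymm (le_ciInf fun w => (hP z).2 w w.2) ?_) y hy
  exact ciInf_le ⟨0, fun _ ⟨w, h⟩ => h ▸ norm_nonneg _⟩ (⟨P z, (hP z).1⟩ : Ω)

theorem norm_sub_sq_le_inner (hconv : Convex ℝ Ω) (hP : IsProjOn Ω P) (z : F) {y : F}
    (hy : y ∈ Ω) : ‖z - P z‖ ^ 2 ≤ ⟪z - y, z - P z⟫ := by
  have hsplit : z - y = (z - P z) - (y - P z) := by abel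
  rw [hsplit, inner_sub_left, real_inner_self_eq_norm_sq, real_inner_comm]
  linarith [hP.inner_sub_le_zero hconv z hy]

theorem lipschitzWith_one (hconv : Convex ℝ Ω) (hP : IsProjOn Ω P) : LipschitzWith 1 P := by
  refine LipschitzWith.of_dist_le_mul fun z w => ?_
  rw [NNReal.coe_one, one_mul, dist_eq_norm, dist_eq_norm]
  have hz := hP.inner_sub_le_zero hconv z (hP w).1
  have hw := hP.inner_sub_le_zero hconv w (hP z).1
  have key : ‖P z - P w‖ ^ 2 ≤ ⟪z - w, P z - P w⟫ := by
    have hsplit : z - w = (P z - P w) + ((z - P z) - (w - P w)) := by abel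
    have hneg : P w - P z = -(P z - P w) := (neg_sub _ _).symm
    rw [hsplit, inner_add_left, real_inner_self_eq_norm_sq, inner_sub_left]
    rw [hneg, inner_neg_right] at hz
    linarith
  nlinarith [real_inner_le_norm (z - w) (P z - P w), norm_nonneg (P z - P w),
    norm_nonneg (z - w)]

theorem mem_of_tendsto_sub {X : Type*} [TopologicalSpace X] (hconv : Convex ℝ Ω)
    (hP : IsProjOn Ω P) {T : X → F} (hT : Continuous T) {y : ℕ → X} {a : X}
    (hy : Tendsto y atTop (𝓝 a))
    (hres : Tendsto (fun t => T (y t) - P (T (y t))) atTop (𝓝 0)) : T a ∈ Ω := by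
  have hcont : Continuous fun v => T v - P (T v) :=
    hT.sub ((hP.lipschitzWith_one hconv).continuous.comp hT)
  have hfix : T a = P (T a) :=
    sub_eq_zero.1 (tendsto_nhds_unique ((hcont.tendsto a).comp hy) hres)
  exact hfix ▸ (hP (T a)).1

end IsProjOn

section ProjGradStep

variable {E F : Type*} [NormedAddCommGroup E] [InnerProductSpace ℝ E] [CompleteSpace E]
  [NormedAddCommGroup F] [InnerProductSpace ℝ F] [CompleteSpace F]

/-- `T† (T v - P (T v))` is the gradient of `v ↦ ½ ‖T v - P (T v)‖²`. -/
def projGradStep (T : E →L[ℝ] F) (P : F → F) (t : ℝ) (v : E) : E :=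
  v - t • (T†) (T v - P (T v))

theorem norm_smul_adjoint_sq_le (T : E →L[ℝ] F) {t : ℝ} (ht0 : 0 ≤ t) (ht : t * ‖T‖ ^ 2 ≤ 1)
    (w : F) : ‖t • (T†) w‖ ^ 2 ≤ t * ‖w‖ ^ 2 := by
  have hadj : ‖(T†) w‖ ≤ ‖T‖ * ‖w‖ := by
    simpa [LinearIsometryEquiv.norm_map] using (T†).le_opNorm w
  calc ‖t • (T†) w‖ ^ 2 = t ^ 2 * ‖(T†) w‖ ^ 2 := by
        rw [norm_smul, Real.norm_of_nonneg ht0, mul_pow]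
    _ ≤ t ^ 2 * (‖T‖ * ‖w‖) ^ 2 := by gcongr
    _ = t * (t * ‖T‖ ^ 2) * ‖w‖ ^ 2 := by ring
    _ ≤ t * 1 * ‖w‖ ^ 2 := by gcongr
    _ = t * ‖w‖ ^ 2 := by rw [mul_one]

theorem norm_projGradStep_sub_self_sq_le (T : E →L[ℝ] F) (P : F → F) {t : ℝ} (ht0 : 0 ≤ t)
    (ht : t * ‖T‖ ^ 2 ≤ 1) (v : E) :
    ‖projGradStep T P t v - v‖ ^ 2 ≤ t * ‖T v - P (T v)‖ ^ 2 := by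
  rw [projGradStep, sub_sub_cancel_left, norm_neg]
  exact norm_smul_adjoint_sq_le T ht0 ht _

theorem IsProjOn.norm_projGradStep_sub_sq_add_le {Ω : Set F} {P : F → F}
    (hconv : Convex ℝ Ω) (hP : IsProjOn Ω P) (T : E →L[ℝ] F) {z : E} (hz : T z ∈ Ω)
    {t : ℝ} (ht0 : 0 ≤ t) (ht : t * ‖T‖ ^ 2 ≤ 1) (v : E) :
    ‖projGradStep T P t v - z‖ ^ 2 + t * ‖T v - P (T v)‖ ^ 2 ≤ ‖v - z‖ ^ 2 := by
  set r := T v - P (T v)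
  have hinner : ‖r‖ ^ 2 ≤ ⟪v - z, (T†) r⟫ := by
    rw [ContinuousLinearMap.adjoint_inner_right, map_sub]
    exact hP.norm_sub_sq_le_inner hconv (T v) hz
  have hstep := norm_smul_adjoint_sq_le T ht0 ht r
  have hsplit : projGradStep T P t v - z = (v - z) - t • (T†) r := by
    rw [projGradStep]; abel
  rw [hsplit, norm_sub_sq_real, real_inner_smul_right]
  nlinarith

end ProjGradStep

section Sequences

theorem summable_of_eventually_add_le {a b : ℕ → ℝ} (ha : ∀ k, 0 ≤ a k) (hb : ∀ k, 0 ≤ b k)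
    (h : ∀ᶠ k in atTop, a (k + 1) + b k ≤ a k) : Summable b := by
  obtain ⟨N, hN⟩ := eventually_atTop.1 h
  rw [← summable_nat_add_iff N]
  refine summable_of_sum_range_le (c := a N) (fun k => hb _) fun n => ?_
  suffices ∑ k ∈ range n, b (k + N) + a (n + N) ≤ a N by linarith [ha (n + N)]
  induction n with
  | zero => simp
  | succ n ih =>
    rw [sum_range_succ, add_right_comm n 1 N]
    linarith [hN (n + N) (Nat.le_add_left N n)]

theorem tendsto_zero_of_eventually_norm_sq_le {ι G : Type*} [SeminormedAddCommGroup G]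
    {l : Filter ι} {v : ι → G} {b : ι → ℝ} (h : ∀ᶠ k in l, ‖v k‖ ^ 2 ≤ b k)
    (hb : Tendsto b l (𝓝 0)) : Tendsto v l (𝓝 0) := by
  rw [tendsto_zero_iff_norm_tendsto_zero]
  refine squeeze_zero' (Eventually.of_forall fun k => norm_nonneg _)
    (h.mono fun k hk => Real.le_sqrt_of_sq_le hk) ?_
  simpa using hb.sqrt

theorem tendsto_add_sub_of_tendsto_succ_sub {G : Type*} [AddCommGroup G] [TopologicalSpace G]
    [IsTopologicalAddGroup G] {x : ℕ → G} (hx : Tendsto (fun k => x (k + 1) - x k) atTop (𝓝 0))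
    (j : ℕ) : Tendsto (fun k => x (k + j) - x k) atTop (𝓝 0) := by
  induction j with
  | zero => simpa using tendsto_const_nhds
  | succ j ih =>
    have h := (hx.comp (tendsto_add_atTop_nat j)).add ih
    rw [add_zero] at h
    refine h.congr fun k => ?_
    simp only [Function.comp_apply, ← add_assoc]
    abel

theorem exists_strictMono_forall_tendsto_add {G : Type*} [NormedAddCommGroup G] [ProperSpace G]
    {x : ℕ → G} {s : Set G} (hs : Bornology.IsBounded s) (hxs : ∀ᶠ k in atTop, x k ∈ s)
    (hx : Tendsto (fun k => x (k + 1) - x k) atTop (𝓝 0)) {m : ℕ → ℕ}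
    (hm : Tendsto m atTop atTop) :
    ∃ a, ∃ φ : ℕ → ℕ, StrictMono φ ∧ ∀ j, Tendsto (fun t => x (m (φ t) + j)) atTop (𝓝 a) := by
  obtain ⟨a, -, φ, hφ, ha⟩ :=
    tendsto_subseq_of_frequently_bounded hs (hm.eventually hxs).frequently
  refine ⟨a, φ, hφ, fun j => ?_⟩
  have := ((tendsto_add_sub_of_tendsto_succ_sub hx j).comp (hm.comp hφ.tendsto_atTop)).add ha
  simpa only [Function.comp_apply, sub_add_cancel, zero_add] using this

theorem exists_eventually_dist_le_of_eventually_dist_succ_le {X : Type*} [PseudoMetricSpace X]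
    {x : ℕ → X} {a : X} (h : ∀ᶠ k in atTop, dist (x (k + 1)) a ≤ dist (x k) a) :
    ∃ R, ∀ᶠ k in atTop, x k ∈ Metric.closedBall a R := by
  obtain ⟨N, hN⟩ := eventually_atTop.1 h
  have hanti := antitoneOn_nat_Ici_of_succ_le (f := fun k => dist (x k) a) hN
  exact ⟨dist (x N) a, eventually_atTop.2 ⟨N, fun k hk => hanti (le_refl N) hk hk⟩⟩

theorem tendsto_of_eventually_dist_succ_le_of_subseq {X : Type*} [PseudoMetricSpace X]
    {x : ℕ → X} {a : X} (h : ∀ᶠ k in atTop, dist (x (k + 1)) a ≤ dist (x k) a) {φ : ℕ → ℕ}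
    (hφ : Tendsto φ atTop atTop) (ha : Tendsto (x ∘ φ) atTop (𝓝 a)) :
    Tendsto x atTop (𝓝 a) := by
  obtain ⟨N, hN⟩ := eventually_atTop.1 h
  have hanti := antitoneOn_nat_Ici_of_succ_le (f := fun k => dist (x k) a) hN
  refine Metric.tendsto_atTop.2 fun ε hε => ?_
  obtain ⟨t, htN, htε⟩ :=
    ((hφ.eventually_ge_atTop N).and (Metric.tendsto_nhds.1 ha ε hε)).exists
  exact ⟨φ t, fun k hk => (hanti htN (htN.trans hk) hk).trans_lt htε⟩

end Sequences

section Steering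

variable {S : ℕ} {σ : ℕ → ℝ}

theorem eventually_le_two_mul_of_steering (hσpos : ∀ k, 0 < σ k)
    (hσratio : ∀ j, 1 ≤ j → j ≤ S - 1 →
      Tendsto (fun k => σ (k * S + j) / σ (k * S)) atTop (𝓝 1)) :
    ∀ᶠ m in atTop, ∀ j : Fin S,
      σ (m * S + j) ≤ 2 * σ (m * S) ∧ σ (m * S) ≤ 2 * σ (m * S + j) := by
  refine eventually_all.2 fun j => ?_
  rcases Nat.eq_zero_or_pos j with hj | hj
  · refine Eventually.of_forall fun m => ?_
    simp only [hj, add_zero]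
    constructor <;> linarith [hσpos (m * S)]
  have hratio := hσratio j hj (Nat.le_sub_one_of_lt j.isLt)
  filter_upwards [hratio.eventually (Ioo_mem_nhds one_half_lt_one one_lt_two)]
    with m ⟨hlo, hhi⟩
  rw [lt_div_iff₀ (hσpos _)] at hlo
  rw [div_lt_iff₀ (hσpos _)] at hhi
  constructor <;> linarith

variable [NeZero S]

theorem summable_iff_summable_sum_block {f : ℕ → ℝ} (hf : ∀ k, 0 ≤ f k) :
    Summable f ↔ Summable fun m => ∑ j : Fin S, f (m * S + j) := by
  refine ((Nat.divModEquiv S).symm.summable_iff.symm.trans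
    (summable_prod_of_nonneg fun _ => hf _)).trans ?_
  simp [tsum_fintype, (hasSum_fintype _).summable]

theorem not_summable_comp_mul_of_steering (hσpos : ∀ k, 0 < σ k)
    (hσratio : ∀ j, 1 ≤ j → j ≤ S - 1 →
      Tendsto (fun k => σ (k * S + j) / σ (k * S)) atTop (𝓝 1))
    (hσdiv : ¬Summable σ) : ¬Summable fun m => σ (m * S) := by
  intro h
  refine hσdiv ((summable_iff_summable_sum_block (S := S) fun k => (hσpos k).le).2 ?_)
  refine (h.mul_left (2 * (S : ℝ))).of_norm_bounded_eventually_nat ?_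
  filter_upwards [eventually_le_two_mul_of_steering hσpos hσratio] with m hm
  rw [Real.norm_of_nonneg (sum_nonneg fun j _ => (hσpos _).le)]
  calc ∑ j : Fin S, σ (m * S + j) ≤ ∑ _j : Fin S, 2 * σ (m * S) :=
        sum_le_sum fun j _ => (hm j).1
    _ = 2 * S * σ (m * S) := by simp; ring

theorem frequently_forall_lt_of_summable_mul (hσpos : ∀ k, 0 < σ k)
    (hσratio : ∀ j, 1 ≤ j → j ≤ S - 1 →
      Tendsto (fun k => σ (k * S + j) / σ (k * S)) atTop (𝓝 1))
    (hσdiv : ¬Summable σ) {u : ℕ → ℝ} (hu : ∀ k, 0 ≤ u k)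
    (hsum : Summable fun k => σ k * u k) {ε : ℝ} (hε : 0 < ε) :
    ∃ᶠ m in atTop, ∀ j : Fin S, u (m * S + j) < ε := by
  by_contra hfreq
  simp only [not_frequently, not_forall, not_lt] at hfreq
  refine not_summable_comp_mul_of_steering hσpos hσratio hσdiv ?_
  have hblock := (summable_iff_summable_sum_block (S := S)
    fun k => mul_nonneg (hσpos k).le (hu k)).1 hsum
  refine (hblock.mul_left (2 / ε)).of_norm_bounded_eventually_nat ?_
  filter_upwards [hfreq, eventually_le_two_mul_of_steering hσpos hσratio]
    with m ⟨j, hj⟩ hm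
  rw [Real.norm_of_nonneg (hσpos _).le]
  calc σ (m * S) ≤ 2 / ε * (σ (m * S + j) * ε) := by
        rw [mul_left_comm, div_mul_cancel₀ _ hε.ne']; linarith [(hm j).2]
    _ ≤ 2 / ε * (σ (m * S + j) * u (m * S + j)) := by gcongr; exact (hσpos _).le
    _ ≤ 2 / ε * ∑ j : Fin S, σ (m * S + j) * u (m * S + j) := by
        gcongr
        exact single_le_sum (f := fun j : Fin S => σ (m * S + j) * u (m * S + j))
          (fun j _ => mul_nonneg (hσpos _).le (hu _)) (mem_univ j)

theorem exists_strictMono_tendsto_zero_of_summable_mul (hσpos : ∀ k, 0 < σ k)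
    (hσratio : ∀ j, 1 ≤ j → j ≤ S - 1 →
      Tendsto (fun k => σ (k * S + j) / σ (k * S)) atTop (𝓝 1))
    (hσdiv : ¬Summable σ) {u : ℕ → ℝ} (hu : ∀ k, 0 ≤ u k)
    (hsum : Summable fun k => σ k * u k) :
    ∃ ψ : ℕ → ℕ, StrictMono ψ ∧
      ∀ j : Fin S, Tendsto (fun t => u (ψ t * S + j)) atTop (𝓝 0) := by
  obtain ⟨ψ, hψ, hsmall⟩ := extraction_forall_of_frequently fun t =>
    frequently_forall_lt_of_summable_mul hσpos hσratio hσdiv hu hsum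
      (Nat.one_div_pos_of_nat (n := t))
  exact ⟨ψ, hψ, fun j => squeeze_zero (fun t => hu _) (fun t => (hsmall t j).le)
    tendsto_one_div_add_atTop_nhds_zero_nat⟩

end Steering

section ProjGradIteration

variable {E F : Type*} [NormedAddCommGroup E] [InnerProductSpace ℝ E]
  [NormedAddCommGroup F] [InnerProductSpace ℝ F] [CompleteSpace F]

theorem eventually_projGradStep_fejer [CompleteSpace E] {ι : Type*} [Finite ι]
    {Ω : ι → Set F} {P : ι → F → F} (hconv : ∀ s, Convex ℝ (Ω s))
    (hP : ∀ s, IsProjOn (Ω s) (P s)) (T : ι → E →L[ℝ] F) {c : ι → ℝ} (hc : ∀ s, 0 ≤ c s)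
    {σ : ℕ → ℝ} (hσ : ∀ k, 0 ≤ σ k) (hσ0 : Tendsto σ atTop (𝓝 0)) (i : ℕ → ι) {x : ℕ → E}
    (hrec : ∀ k, x (k + 1) = projGradStep (T (i k)) (P (i k)) (σ k * c (i k)) (x k)) :
    ∀ᶠ k in atTop, ∀ z, (∀ s, T s z ∈ Ω s) →
      ‖x (k + 1) - z‖ ^ 2 + σ k * c (i k) * ‖T (i k) (x k) - P (i k) (T (i k) (x k))‖ ^ 2
          ≤ ‖x k - z‖ ^ 2 ∧
        ‖x (k + 1) - x k‖ ^ 2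
          ≤ σ k * c (i k) * ‖T (i k) (x k) - P (i k) (T (i k) (x k))‖ ^ 2 := by
  have hsmall : ∀ᶠ k in atTop, ∀ s, σ k * (c s * ‖T s‖ ^ 2) ≤ 1 :=
    eventually_all.2 fun s => by
      have h := hσ0.mul_const (c s * ‖T s‖ ^ 2)
      rw [zero_mul] at h
      exact h.eventually (ge_mem_nhds one_pos)
  filter_upwards [hsmall] with k hk z hz
  have hτ : 0 ≤ σ k * c (i k) := mul_nonneg (hσ k) (hc _)
  have hτT : σ k * c (i k) * ‖T (i k)‖ ^ 2 ≤ 1 := by simpa only [mul_assoc] using hk (i k)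
  rw [hrec k]
  exact ⟨(hP (i k)).norm_projGradStep_sub_sq_add_le (hconv _) _ (hz _) hτ hτT (x k),
    norm_projGradStep_sub_self_sq_le _ _ hτ hτT (x k)⟩

theorem exists_tendsto_of_cyclic_projGradStep [FiniteDimensional ℝ E] {S : ℕ} [NeZero S]
    {Ω : Fin S → Set F} {P : Fin S → F → F} (hconv : ∀ s, Convex ℝ (Ω s))
    (hP : ∀ s, IsProjOn (Ω s) (P s)) (T : Fin S → E →L[ℝ] F) {c : Fin S → ℝ}
    (hc : ∀ s, 0 < c s) (hsol : ∃ z, ∀ s, T s z ∈ Ω s) {σ : ℕ → ℝ} (hσpos : ∀ k, 0 < σ k)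
    (hσ0 : Tendsto σ atTop (𝓝 0))
    (hσratio : ∀ j, 1 ≤ j → j ≤ S - 1 →
      Tendsto (fun k => σ (k * S + j) / σ (k * S)) atTop (𝓝 1))
    (hσdiv : ¬Summable σ) {i : ℕ → Fin S} (hi : ∀ k, (i k : ℕ) = k % S) {x : ℕ → E}
    (hrec : ∀ k, x (k + 1) = projGradStep (T (i k)) (P (i k)) (σ k * c (i k)) (x k)) :
    ∃ xstar, Tendsto x atTop (𝓝 xstar) ∧ ∀ s, T s xstar ∈ Ω s := by
  obtain ⟨z₀, hz₀⟩ := hsol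
  set r : ℕ → F := fun k => T (i k) (x k) - P (i k) (T (i k) (x k))
  have hfejer := eventually_projGradStep_fejer hconv hP T (fun s => (hc s).le)
    (fun k => (hσpos k).le) hσ0 i hrec
  have hτr : ∀ k, 0 ≤ σ k * c (i k) * ‖r k‖ ^ 2 := fun k =>
    mul_nonneg (mul_nonneg (hσpos k).le (hc _).le) (sq_nonneg _)
  have hdist : ∀ z, (∀ s, T s z ∈ Ω s) → ∀ᶠ k in atTop, dist (x (k + 1)) z ≤ dist (x k) z :=
    fun z hz => hfejer.mono fun k hk => by
      rw [dist_eq_norm, dist_eq_norm, ← sq_le_sq₀ (norm_nonneg _) (norm_nonneg _)]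
      linarith [(hk z hz).1, hτr k]
  have hsum : Summable fun k => σ k * c (i k) * ‖r k‖ ^ 2 :=
    summable_of_eventually_add_le (a := fun k => ‖x k - z₀‖ ^ 2) (fun _ => sq_nonneg _) hτr
      (hfejer.mono fun k hk => (hk z₀ hz₀).1)
  have hsucc : Tendsto (fun k => x (k + 1) - x k) atTop (𝓝 0) :=
    tendsto_zero_of_eventually_norm_sq_le (hfejer.mono fun k hk => (hk z₀ hz₀).2)
      hsum.tendsto_atTop_zero
  obtain ⟨ψ, hψ, hres⟩ := exists_strictMono_tendsto_zero_of_summable_mul hσpos hσratio hσdiv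
    (u := fun k => c (i k) * ‖r k‖ ^ 2) (fun k => mul_nonneg (hc _).le (sq_nonneg _))
    (by simpa only [mul_assoc] using hsum)
  have hψS : Tendsto (fun t => ψ t * S) atTop atTop :=
    hψ.tendsto_atTop.atTop_mul_const' (NeZero.pos S)
  obtain ⟨R, hR⟩ := exists_eventually_dist_le_of_eventually_dist_succ_le (hdist z₀ hz₀)
  obtain ⟨xstar, φ, hφ, hlim⟩ :=
    exists_strictMono_forall_tendsto_add Metric.isBounded_closedBall hR hsucc hψS
  have hmem : ∀ s, T s xstar ∈ Ω s := by
    intro s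
    have hidx : ∀ t, i (ψ (φ t) * S + s) = s := fun t => Fin.ext <| by
      rw [hi, Nat.mul_add_mod_of_lt s.isLt]
    refine (hP s).mem_of_tendsto_sub (hconv s) (T s).continuous (hlim s) ?_
    refine tendsto_zero_of_eventually_norm_sq_le
      (b := fun t => (c s)⁻¹ * (c s * ‖r (ψ (φ t) * S + s)‖ ^ 2))
      (Eventually.of_forall fun t => ?_) ?_
    · simp [r, hidx, (hc s).ne']
    · simpa [hidx] using ((hres s).comp hφ.tendsto_atTop).const_mul (c s)⁻¹
  exact ⟨xstar, tendsto_of_eventually_dist_succ_le_of_subseq (hdist xstar hmem)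
    (hψS.comp hφ.tendsto_atTop) (hlim 0), hmem⟩

end ProjGradIteration

theorem smul_add_eq_iff_of_inverse {V : Type*} [AddCommGroup V] [Module ℝ V]
    {u u' a : V →ₗ[ℝ] V} (h₁ : ∀ v, u' (u v) = v) (h₂ : ∀ v, u (u' v) = v) {α : ℝ}
    (hα : α ≠ 0) (x ω : V) : α • u ω + a x = x ↔ (1 / α) • u' (x - a x) = ω := by
  constructor
  · intro h
    rw [sub_eq_of_eq_add h.symm, map_smul, h₁, smul_smul, one_div_mul_cancel hα, one_smul]
  · rintro rfl
    rw [map_smul, h₂, smul_smul, mul_one_div_cancel hα, one_smul, sub_add_cancel]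

section MatrixModel

variable {ι : Type*} [Fintype ι] [DecidableEq ι]

theorem toEuclideanLin_transpose_apply (A : Matrix ι ι ℝ) (v : EuclideanSpace ℝ ι) :
    toEuclideanLin Aᵀ v = ((toEuclideanCLM (𝕜 := ℝ) A)†) v := by
  rw [← ContinuousLinearMap.star_eq_adjoint, ← map_star, star_eq_conjTranspose,
    conjTranspose_eq_transpose_of_trivial]
  rfl

theorem mem_affine_image_iff_toEuclideanLin_mem {U A K : Matrix ι ι ℝ} (hU₁ : Uᵀ * U = 1)
    (hU₂ : U * Uᵀ = 1) {α : ℝ} (hα : α ≠ 0) (hK : K = (1 / α) • (Uᵀ * (1 - A)))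
    (Ω : Set (EuclideanSpace ℝ ι)) (x : EuclideanSpace ℝ ι) :
    x ∈ (fun y => α • toEuclideanLin U y + toEuclideanLin A x) '' Ω ↔
      toEuclideanLin K x ∈ Ω := by
  have hinv : ∀ M N : Matrix ι ι ℝ, M * N = 1 →
      ∀ v, toEuclideanLin M (toEuclideanLin N v) = v :=
    fun M N h v => by simpa using congrArg (fun L => toEuclideanLin L v) h
  have hKx : toEuclideanLin K x = (1 / α) • toEuclideanLin Uᵀ (x - toEuclideanLin A x) := by
    simp [hK]
  have key := smul_add_eq_iff_of_inverse (a := toEuclideanLin A) (hinv _ _ hU₁) (hinv _ _ hU₂)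
    hα x
  rw [hKx]
  constructor
  · rintro ⟨ω, hω, h⟩
    rwa [(key ω).1 h]
  · exact fun h => ⟨_, h, (key _).2 rfl⟩

end MatrixModel

theorem stmt_13_general {n S : ℕ} (hS : 0 < S)
    (Ω : Fin S → Set (EuclideanSpace ℝ (Fin n)))
    (hconv : ∀ s, Convex ℝ (Ω s))
    (A U : Fin S → Matrix (Fin n) (Fin n) ℝ)
    (hU1 : ∀ s, (U s)ᵀ * U s = 1) (hU2 : ∀ s, U s * (U s)ᵀ = 1)
    (α : Fin S → ℝ) (hα : ∀ s, 0 < α s)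
    (P : Fin S → EuclideanSpace ℝ (Fin n) → EuclideanSpace ℝ (Fin n))
    (hP : ∀ s, IsProjOn (Ω s) (P s))
    (C : Fin S → EuclideanSpace ℝ (Fin n) → Set (EuclideanSpace ℝ (Fin n)))
    (hC : ∀ s x, C s x =
      (fun y => α s • toEuclideanLin (U s) y + toEuclideanLin (A s) x) '' Ω s)
    (K : Fin S → Matrix (Fin n) (Fin n) ℝ)
    (hK : ∀ s, K s = (1 / α s) • ((U s)ᵀ * (1 - A s)))
    (hsol : ∃ x, ∀ s, x ∈ C s x)
    -- `σ` is an `S`-steering sequence: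
    (σ : ℕ → ℝ) (hσpos : ∀ k, 0 < σ k)
    (hσ0 : Tendsto σ atTop (nhds 0))
    (hσratio : ∀ j, 1 ≤ j → j ≤ S - 1 →
      Tendsto (fun k => σ (k * S + j) / σ (k * S)) atTop (nhds 1))
    (hσdiv : Tendsto (fun N => ∑ k ∈ Finset.range N, σ k) atTop atTop)
    -- the cyclic control `i(k) = k mod S` and the sequential iteration:
    (i : ℕ → Fin S) (hi : ∀ k, i k = ⟨k % S, Nat.mod_lt k hS⟩)
    (x : ℕ → EuclideanSpace ℝ (Fin n))
    (hrec : ∀ k, x (k + 1) = x k - σ k • (α (i k)) ^ 2 •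
      toEuclideanLin (K (i k))ᵀ
        (toEuclideanLin (K (i k)) (x k) - P (i k) (toEuclideanLin (K (i k)) (x k)))) :
    ∃ xstar, Tendsto x atTop (nhds xstar) ∧ ∀ s, xstar ∈ C s xstar := by
  have : NeZero S := ⟨hS.ne'⟩
  set T : Fin S → EuclideanSpace ℝ (Fin n) →L[ℝ] EuclideanSpace ℝ (Fin n) :=
    fun s => toEuclideanCLM (𝕜 := ℝ) (K s)
  have hfix : ∀ s y, y ∈ C s y ↔ T s y ∈ Ω s := fun s y => by
    rw [hC]
    exact mem_affine_image_iff_toEuclideanLin_mem (hU1 s) (hU2 s) (hα s).ne' (hK s) (Ω s) y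
  have hstep : ∀ k, x (k + 1) = projGradStep (T (i k)) (P (i k)) (σ k * α (i k) ^ 2) (x k) :=
    fun k => by rw [hrec k, smul_smul, toEuclideanLin_transpose_apply]; rfl
  obtain ⟨xstar, hlim, hmem⟩ := exists_tendsto_of_cyclic_projGradStep hconv hP T
    (c := fun s => α s ^ 2) (fun s => pow_pos (hα s) 2)
    (hsol.imp fun z hz s => (hfix s z).1 (hz s)) hσpos hσ0 hσratio
    ((not_summable_iff_tendsto_nat_atTop_of_nonneg fun k => (hσpos k).le).2 hσdiv)
    (fun k => by rw [hi]) hstep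
  exact ⟨xstar, hlim, fun s => (hfix s xstar).2 (hmem s)⟩

theorem stmt_13 {n S : ℕ} (hS : 0 < S)
    (Ω : Fin S → Set (EuclideanSpace ℝ (Fin n)))
    (hne : ∀ s, (Ω s).Nonempty) (hcl : ∀ s, IsClosed (Ω s)) (hconv : ∀ s, Convex ℝ (Ω s))
    (A U : Fin S → Matrix (Fin n) (Fin n) ℝ)
    (hU1 : ∀ s, (U s)ᵀ * U s = 1) (hU2 : ∀ s, U s * (U s)ᵀ = 1)
    (α : Fin S → ℝ) (hα : ∀ s, 0 < α s)
    (P : Fin S → EuclideanSpace ℝ (Fin n) → EuclideanSpace ℝ (Fin n))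
    (hP : ∀ s, IsProjOn (Ω s) (P s))
    (C : Fin S → EuclideanSpace ℝ (Fin n) → Set (EuclideanSpace ℝ (Fin n)))
    (hC : ∀ s x, C s x =
      (fun y => α s • toEuclideanLin (U s) y + toEuclideanLin (A s) x) '' Ω s)
    (K : Fin S → Matrix (Fin n) (Fin n) ℝ)
    (hK : ∀ s, K s = (1 / α s) • ((U s)ᵀ * (1 - A s)))
    (hsol : ∃ x, ∀ s, x ∈ C s x)
    -- `σ` is an `S`-steering sequence:
    (σ : ℕ → ℝ) (hσpos : ∀ k, 0 < σ k)
    (hσ0 : Tendsto σ atTop (nhds 0))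
    (hσratio : ∀ j, 1 ≤ j → j ≤ S - 1 →
      Tendsto (fun k => σ (k * S + j) / σ (k * S)) atTop (nhds 1))
    (hσdiv : Tendsto (fun N => ∑ k ∈ Finset.range N, σ k) atTop atTop)
    -- the cyclic control `i(k) = k mod S` and the sequential iteration:
    (i : ℕ → Fin S) (hi : ∀ k, i k = ⟨k % S, Nat.mod_lt k hS⟩)
    (x : ℕ → EuclideanSpace ℝ (Fin n))
    (hrec : ∀ k, x (k + 1) = x k - σ k • (α (i k)) ^ 2 •
      toEuclideanLin (K (i k))ᵀ
        (toEuclideanLin (K (i k)) (x k) - P (i k) (toEuclideanLin (K (i k)) (x k))))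
    (hbdd : ∃ M, ∀ k, ‖x k‖ ≤ M) :
    ∃ xstar, Tendsto x atTop (nhds xstar) ∧ ∀ s, xstar ∈ C s xstar :=
  stmt_13_general hS Ω hconv A U hU1 hU2 α hα P hP C hC K hK hsol σ hσpos hσ0 hσratio hσdiv i hi x
    hrec
end
end
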